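/- arXiv:2404.06595 — 4 statements merged into one kernel-verified Lean document; each statement's English description precedes it below -/
import Mathlib

section
/- Let n ≥ 2, p ∈ ℂ, and let Φ be a trace-preserving superoperator on n×n complex matrices. Then 𝔓(Λ_p ∘ Φ) = Λ_p ∘ 𝔓(Φ). -/
open Matrix

/-- The superoperator `X ↦ (Tr X) • I` on `n × n` complex matrices. -/
noncomputable def traceMap (n : ℕ) :
    Matrix (Fin n) (Fin n) ℂ →ₗ[ℂ] Matrix (Fin n) (Fin n) ℂ :=
  (LinearMap.toSpanSingleton ℂ _ (1 : Matrix (Fin n) (Fin n) ℂ)).comp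
    (Matrix.traceLinearMap (Fin n) ℂ ℂ)

/-- The depolarizing superoperator `Λ_p : X ↦ p • X + (1 - p) • (Tr X / n) • I`. -/
noncomputable def depol (n : ℕ) (p : ℂ) :
    Matrix (Fin n) (Fin n) ℂ →ₗ[ℂ] Matrix (Fin n) (Fin n) ℂ :=
  p • LinearMap.id + ((1 - p) / (n : ℂ)) • traceMap n

/-- The superoperator trace `tr Φ = Σ_{k,m} (Φ E_{km})_{km}`. -/
noncomputable def supertrace (n : ℕ)
    (Φ : Matrix (Fin n) (Fin n) ℂ →ₗ[ℂ] Matrix (Fin n) (Fin n) ℂ) : ℂ :=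
  ∑ k : Fin n, ∑ m : Fin n, (Φ (Matrix.single k m 1)) k m

/-- The twirling hyperprojector with respect to the full unitary group. -/
noncomputable def twirl (n : ℕ)
    (Φ : Matrix (Fin n) (Fin n) ℂ →ₗ[ℂ] Matrix (Fin n) (Fin n) ℂ) :
    Matrix (Fin n) (Fin n) ℂ →ₗ[ℂ] Matrix (Fin n) (Fin n) ℂ :=
  ((((n : ℂ) * Matrix.trace (Φ 1) - supertrace n Φ) / ((n : ℂ) * ((n : ℂ) ^ 2 - 1))) •
      traceMap n) +
    ((((n : ℂ) * supertrace n Φ - Matrix.trace (Φ 1)) / ((n : ℂ) * ((n : ℂ) ^ 2 - 1))) •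
      LinearMap.id)

/-- `𝔓(Λ_p ∘ Φ) = Λ_p ∘ 𝔓(Φ)` for trace-preserving `Φ`. -/
theorem twirl_depol_comp (n : ℕ) (hn : 2 ≤ n) (p : ℂ)
    (Φ : Matrix (Fin n) (Fin n) ℂ →ₗ[ℂ] Matrix (Fin n) (Fin n) ℂ)
    (hΦ : ∀ X, Matrix.trace (Φ X) = Matrix.trace X) :
    twirl n (depol n p ∘ₗ Φ) = depol n p ∘ₗ twirl n Φ := by
  have hn0 : (n : ℂ) ≠ 0 := Nat.cast_ne_zero.mpr (by omega)
  have htr1 : Matrix.trace (Φ 1) = (n : ℂ) := by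
    rw [hΦ, Matrix.trace_one]; simp
  have htr1' : Matrix.trace ((depol n p ∘ₗ Φ) 1) = (n : ℂ) := by
    simp only [LinearMap.comp_apply, depol, LinearMap.add_apply, LinearMap.smul_apply,
      LinearMap.id_apply, traceMap, Matrix.traceLinearMap_apply,
      LinearMap.toSpanSingleton_apply, Matrix.trace_add, Matrix.trace_smul, smul_eq_mul,
      Matrix.trace_one, htr1, Fintype.card_fin]
    field_simp
    ring
  have hst : supertrace n (depol n p ∘ₗ Φ) = p * supertrace n Φ + (1 - p) := by
    have hE : ∀ k m : Fin n, Matrix.trace (Φ (Matrix.single k m 1)) =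
        if k = m then (1 : ℂ) else 0 := by
      intro k m
      rw [hΦ]
      rcases eq_or_ne k m with rfl | h
      · rw [if_pos rfl]; exact Matrix.trace_single_eq_same k (1 : ℂ)
      · rw [if_neg h]; exact Matrix.trace_single_eq_of_ne k m (1 : ℂ) h
    simp only [supertrace, LinearMap.comp_apply, depol, LinearMap.add_apply,
      LinearMap.smul_apply, LinearMap.id_apply, traceMap, Matrix.traceLinearMap_apply,
      LinearMap.toSpanSingleton_apply, Matrix.add_apply, Matrix.smul_apply, smul_eq_mul,
      hE, Matrix.one_apply]
    have h1 : (∑ x : Fin n, ∑ y : Fin n, p * Φ (Matrix.single x y 1) x y)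
        = p * ∑ k : Fin n, ∑ m : Fin n, Φ (Matrix.single k m 1) k m := by
      simp [Finset.mul_sum]
    have h2 : (∑ x : Fin n, ∑ y : Fin n,
        (1 - p) / (n : ℂ) * ((if x = y then (1:ℂ) else 0) * if x = y then (1:ℂ) else 0))
        = 1 - p := by
      simp [mul_ite, mul_one, mul_zero, Finset.sum_ite_eq, Finset.card_univ]
      field_simp
    simp only [Finset.sum_add_distrib]
    rw [h1, h2]
  have hne : ((n:ℂ)^2 - 1) ≠ 0 := sub_ne_zero.mpr (by
    have hcast : ((n:ℂ))^2 = ((n^2 : ℕ) : ℂ) := by push_cast; ring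
    rw [hcast]
    intro h
    have : n^2 = 1 := by exact_mod_cast h
    nlinarith)
  ext X : 1
  simp only [twirl, hst, htr1, htr1']
  ext i j
  simp only [depol, traceMap, LinearMap.comp_apply, LinearMap.add_apply,
    LinearMap.smul_apply, LinearMap.id_apply, Matrix.traceLinearMap_apply,
    LinearMap.toSpanSingleton_apply, Matrix.trace_smul, smul_eq_mul, Matrix.trace_one,
    Fintype.card_fin, Matrix.add_apply, Matrix.smul_apply, Matrix.one_apply]
  by_cases hij : i = j <;> simp [hij] <;> field_simp <;> ring
end

section
/- Let n ≥ 2, p ∈ ℂ, and let Φ be a trace-preserving superoperator on n×n complex matrices. Then left and right action of Λ_p commute through the hyperprojector: Λ_p ∘ 𝔓(Φ) = 𝔓(Φ) ∘ Λ_p = 𝔓(Φ ∘ Λ_p). -/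
open Matrix

lemma traceMap_apply' (n : ℕ) (X : Matrix (Fin n) (Fin n) ℂ) :
    traceMap n X = (Matrix.trace X) • (1 : Matrix (Fin n) (Fin n) ℂ) := by
  simp [traceMap, LinearMap.toSpanSingleton_apply]

lemma trace_stdBasisMatrix' (n : ℕ) (k m : Fin n) :
    Matrix.trace (Matrix.single k m (1:ℂ)) = if k = m then 1 else 0 := by
  by_cases h : k = m
  · subst h; simp [Matrix.trace_single_eq_same]
  · simp [h, Matrix.trace_single_eq_of_ne (h := h)]

set_option maxHeartbeats 1000000 in
/-- `Λ_p ∘ 𝔓(Φ) = 𝔓(Φ) ∘ Λ_p = 𝔓(Φ ∘ Λ_p)` for trace-preserving `Φ`. -/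
theorem depol_twirl_comm (n : ℕ) (hn : 2 ≤ n) (p : ℂ)
    (Φ : Matrix (Fin n) (Fin n) ℂ →ₗ[ℂ] Matrix (Fin n) (Fin n) ℂ)
    (hΦ : ∀ X, Matrix.trace (Φ X) = Matrix.trace X) :
    depol n p ∘ₗ twirl n Φ = twirl n Φ ∘ₗ depol n p ∧
    twirl n Φ ∘ₗ depol n p = twirl n (Φ ∘ₗ depol n p) := by
  have hn0 : (n : ℂ) ≠ 0 := by
    exact_mod_cast Nat.cast_ne_zero.mpr (by omega)
  have h2 : ((n : ℂ) ^ 2 - 1) ≠ 0 := by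
    rw [sub_ne_zero]
    intro h
    have : ((n ^ 2 : ℕ) : ℂ) = ((1 : ℕ) : ℂ) := by push_cast; simpa using h
    have : n ^ 2 = 1 := Nat.cast_injective this
    nlinarith
  have h1 : Matrix.trace (Φ 1) = (n : ℂ) := by
    rw [hΦ]; simp [Matrix.trace_one]
  -- trace of (Φ ∘ depol) applied to 1
  have hdepol1 : depol n p 1 = (1 : Matrix (Fin n) (Fin n) ℂ) := by
    simp only [depol, LinearMap.add_apply, LinearMap.smul_apply, LinearMap.id_apply,
      traceMap_apply', Matrix.trace_one]
    simp only [Fintype.card_fin, smul_smul, ← add_smul]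
    have h : p + (1 - p) / (n : ℂ) * (n : ℂ) = 1 := by field_simp; ring
    rw [h, one_smul]
  have h1' : Matrix.trace ((Φ ∘ₗ depol n p) 1) = (n : ℂ) := by
    rw [LinearMap.comp_apply, hdepol1, h1]
  -- supertrace of the composition
  have hE : ∀ k m : Fin n, (Φ ∘ₗ depol n p) (Matrix.single k m 1) =
      p • Φ (Matrix.single k m 1) +
        ((1 - p) / (n : ℂ) * (if k = m then 1 else 0)) • Φ 1 := by
    intro k m
    rw [LinearMap.comp_apply]
    simp only [depol, LinearMap.add_apply, LinearMap.smul_apply, LinearMap.id_apply,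
      traceMap_apply', trace_stdBasisMatrix', map_add, _root_.map_smul, smul_smul]
  have hst : supertrace n (Φ ∘ₗ depol n p) = p * supertrace n Φ + (1 - p) := by
    unfold supertrace
    simp only [hE, Matrix.add_apply, Matrix.smul_apply, smul_eq_mul]
    have : ∀ k : Fin n, ∑ m : Fin n,
        (p * (Φ (Matrix.single k m 1)) k m +
          ((1 - p) / (n : ℂ) * (if k = m then 1 else 0)) * (Φ 1) k m)
        = (∑ m : Fin n, p * (Φ (Matrix.single k m 1)) k m)
          + (1 - p) / (n : ℂ) * (Φ 1) k k := by
      intro k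
      rw [Finset.sum_add_distrib]
      congr 1
      rw [Finset.sum_congr rfl (fun m _ => by
        rw [mul_ite, mul_one, mul_zero, ite_mul, zero_mul])]
      simp [Finset.sum_ite_eq]
    simp only [this]
    rw [Finset.sum_add_distrib]
    simp only [← Finset.mul_sum]
    have htr : ∑ i : Fin n, (Φ 1) i i = Matrix.trace (Φ 1) := rfl
    rw [htr, h1, div_mul_cancel₀ _ hn0]
  -- now the main computation
  have hTT : traceMap n ∘ₗ traceMap n = (n : ℂ) • traceMap n := by
    refine LinearMap.ext fun X => ?_
    simp [traceMap_apply', Matrix.trace_smul, Matrix.trace_one, Fintype.card_fin,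
      smul_smul, mul_comm]
  constructor
  · simp only [twirl, depol, LinearMap.add_comp, LinearMap.comp_add, LinearMap.smul_comp,
      LinearMap.comp_smul, LinearMap.id_comp, LinearMap.comp_id, hTT, smul_smul]
    match_scalars <;> field_simp <;> ring
  · have htwirl2 : twirl n (Φ ∘ₗ depol n p) =
        ((((n : ℂ) * (n : ℂ) - (p * supertrace n Φ + (1 - p))) /
            ((n : ℂ) * ((n : ℂ) ^ 2 - 1))) • traceMap n) +
        ((((n : ℂ) * (p * supertrace n Φ + (1 - p)) - (n : ℂ)) /
            ((n : ℂ) * ((n : ℂ) ^ 2 - 1))) • LinearMap.id) := by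
      rw [twirl, hst, h1']
    rw [htwirl2]
    simp only [twirl, depol, h1, LinearMap.add_comp, LinearMap.comp_add,
      LinearMap.smul_comp, LinearMap.comp_smul, LinearMap.id_comp, LinearMap.comp_id,
      hTT, smul_smul]
    match_scalars <;> field_simp <;> ring
end

section
/- Let n ≥ 2 and let 𝓛_I be the GKSL superoperator 𝓛_I(ρ) = −i[H, ρ] + Σ_j (L_j ρ L_j† − ½{L_j† L_j, ρ}) on n×n complex matrices, where H is Hermitian and Tr L_j = 0 for all j. Then (1/n²)·tr(𝓛_I ∘ 𝓛_I) = −2(⟨H²⟩ − ⟨H⟩²) + Σ_{j,k} |⟨L_j L_k⟩|² + ½⟨G²⟩ + ½⟨G⟩², where G = Σ_j L_j† L_j and ⟨A⟩ = Tr A / n. -/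
open Matrix

/-- The average with respect to the chaotic state: `⟨A⟩ = Tr A / n`. -/
noncomputable def avg (n : ℕ) (A : Matrix (Fin n) (Fin n) ℂ) : ℂ :=
  Matrix.trace A / (n : ℂ)

/-- The GKSL superoperator `ρ ↦ −i[H, ρ] + Σ_j (L_j ρ L_j† − ½{L_j† L_j, ρ})`. -/
noncomputable def gksl {n m : ℕ} (H : Matrix (Fin n) (Fin n) ℂ)
    (L : Fin m → Matrix (Fin n) (Fin n) ℂ) :
    Matrix (Fin n) (Fin n) ℂ →ₗ[ℂ] Matrix (Fin n) (Fin n) ℂ :=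
  (-Complex.I) • (LinearMap.mulLeft ℂ H - LinearMap.mulRight ℂ H) +
    ∑ j, (LinearMap.mulRight ℂ (L j)ᴴ ∘ₗ LinearMap.mulLeft ℂ (L j) -
      (1 / 2 : ℂ) • (LinearMap.mulLeft ℂ ((L j)ᴴ * L j) +
        LinearMap.mulRight ℂ ((L j)ᴴ * L j)))

noncomputable def sand {n : ℕ} (A B : Matrix (Fin n) (Fin n) ℂ) :
    Matrix (Fin n) (Fin n) ℂ →ₗ[ℂ] Matrix (Fin n) (Fin n) ℂ :=
  LinearMap.mulRight ℂ B ∘ₗ LinearMap.mulLeft ℂ A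

@[simp] lemma sand_apply {n : ℕ} (A B X : Matrix (Fin n) (Fin n) ℂ) :
    sand A B X = A * X * B := rfl

noncomputable def stL (n : ℕ) :
    (Matrix (Fin n) (Fin n) ℂ →ₗ[ℂ] Matrix (Fin n) (Fin n) ℂ) →ₗ[ℂ] ℂ where
  toFun Φ := supertrace n Φ
  map_add' := by intros; simp [supertrace, Finset.sum_add_distrib]
  map_smul' := by intros; simp [supertrace, Finset.mul_sum]

@[simp] lemma stL_apply (Φ) : stL n Φ = supertrace n Φ := rfl

lemma st_sand (A B : Matrix (Fin n) (Fin n) ℂ) :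
    supertrace n (sand A B) = A.trace * B.trace := by
  have h : ∀ k m : Fin n,
      (A * Matrix.single k m 1 * B : Matrix (Fin n) (Fin n) ℂ) k m = A k k * B m m := by
    intro k m
    simp [Matrix.mul_apply, Matrix.single, ite_and, Finset.sum_mul]
  simp only [supertrace, sand_apply, h]
  simp [Matrix.trace, Matrix.diag, Finset.sum_mul, Finset.mul_sum, mul_comm]
  rw [Finset.sum_comm]

lemma sand_comp (A B C D : Matrix (Fin n) (Fin n) ℂ) :
    sand A B ∘ₗ sand C D = sand (A * C) (D * B) := by
  refine LinearMap.ext fun X => ?_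
  simp [mul_assoc]

lemma st_comb {ι : Type*} [Fintype ι] (c : ι → ℂ) (A B : ι → Matrix (Fin n) (Fin n) ℂ) :
    supertrace n ((∑ i, c i • sand (A i) (B i)) ∘ₗ (∑ i, c i • sand (A i) (B i))) =
      ∑ i, ∑ i', (c i * c i') * ((A i * A i').trace * ((B i' * B i)).trace) := by
  have key : (∑ i, c i • sand (A i) (B i)) ∘ₗ (∑ i, c i • sand (A i) (B i)) =
      ∑ i, ∑ i', (c i * c i') • sand (A i * A i') (B i' * B i) := by
    ext X
    simp only [LinearMap.coe_comp, Function.comp_apply, LinearMap.coe_sum,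
      Finset.sum_apply, LinearMap.smul_apply, sand_apply, Matrix.mul_sum,
      Matrix.sum_mul, Matrix.mul_smul, Matrix.smul_mul, Finset.smul_sum, smul_smul, mul_assoc]
  rw [key]
  rw [show supertrace n = fun Φ => stL n Φ from rfl]
  simp [st_sand, mul_assoc]

lemma gksl_eq {n m : ℕ} (H : Matrix (Fin n) (Fin n) ℂ)
    (L : Fin m → Matrix (Fin n) (Fin n) ℂ) :
    gksl H L = ∑ i : Fin 2 ⊕ Fin m × Fin 3,
      (Sum.elim ![-Complex.I, Complex.I] (fun p => ![1, -(1/2 : ℂ), -(1/2 : ℂ)] p.2) i) •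
      sand (Sum.elim ![H, 1] (fun p => ![L p.1, (L p.1)ᴴ * L p.1, 1] p.2) i)
           (Sum.elim ![1, H] (fun p => ![(L p.1)ᴴ, 1, (L p.1)ᴴ * L p.1] p.2) i) := by
  rw [Fintype.sum_sum_type]
  refine LinearMap.ext fun X => ?_
  simp only [gksl, Fin.sum_univ_two, Fintype.sum_prod_type, Fin.sum_univ_three,
    Sum.elim_inl, Sum.elim_inr, Matrix.cons_val_zero, Matrix.cons_val_one, Matrix.head_cons,
    Matrix.cons_val_two, Matrix.tail_cons,
    LinearMap.add_apply, LinearMap.sub_apply, LinearMap.smul_apply, LinearMap.coe_sum,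
    Finset.sum_apply, LinearMap.coe_comp, Function.comp_apply,
    LinearMap.mulLeft_apply, LinearMap.mulRight_apply, sand_apply,
    one_mul, mul_one, one_smul, smul_sub, smul_add, neg_smul,
    Finset.sum_add_distrib, Finset.sum_sub_distrib, ← Finset.smul_sum]
  simp only [LinearMap.neg_apply, LinearMap.smul_apply, LinearMap.coe_sum,
    Finset.sum_apply, sand_apply, LinearMap.mulLeft_apply, LinearMap.mulRight_apply, one_mul, mul_one, Finset.smul_sum]
  module


lemma key {m : ℕ} (N th th2 : ℂ) (hN : N ≠ 0) (g w : Fin m → ℂ) (q d : Fin m → Fin m → ℂ) :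
    1 / N ^ 2 *
      (-Complex.I * -Complex.I * (th2 * N) + Complex.I * -Complex.I * (th * th) +
            (∑ x, -(1 / 2 : ℂ) * -Complex.I * (w x * N) +
              ∑ x, -(1 / 2 : ℂ) * -Complex.I * (th * g x)) +
          (-Complex.I * Complex.I * (th * th) + Complex.I * Complex.I * (N * th2) +
            (∑ x, -(1 / 2 : ℂ) * Complex.I * (g x * th) +
              ∑ x, -(1 / 2 : ℂ) * Complex.I * (N * w x))) +
        (∑ x, ∑ x_1, d x x_1 +
            (∑ x, -Complex.I * -(1 / 2 : ℂ) * (w x * N) +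
                ∑ x, Complex.I * -(1 / 2 : ℂ) * (g x * th) +
              (∑ x, ∑ x_1, -(1 / 2 : ℂ) * -(1 / 2 : ℂ) * (q x x_1 * N) +
                ∑ x, ∑ x_1, -(1 / 2 : ℂ) * -(1 / 2 : ℂ) * (g x_1 * g x))) +
          (∑ x, -Complex.I * -(1 / 2 : ℂ) * (th * g x) +
              ∑ x, Complex.I * -(1 / 2 : ℂ) * (N * w x) +
            (∑ x, ∑ x_1, -(1 / 2 : ℂ) * -(1 / 2 : ℂ) * (g x * g x_1) +
              ∑ x, ∑ x_1, -(1 / 2 : ℂ) * -(1 / 2 : ℂ) * (N * q x_1 x))))) =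
    -2 * (th2 / N - (th / N) ^ 2) + ∑ x, ∑ x_1, d x x_1 / N ^ 2 +
        1 / 2 * ∑ x, ∑ x_1, q x_1 x / N + 1 / 2 * (∑ x, g x / N) ^ 2 := by
  have e1 : ∑ x : Fin m, ∑ x_1 : Fin m, -(1 / 2 : ℂ) * -(1 / 2 : ℂ) * (N * q x_1 x) =
      ∑ x : Fin m, ∑ x_1 : Fin m, -(1 / 2 : ℂ) * -(1 / 2 : ℂ) * (N * q x x_1) := by
    rw [Finset.sum_comm]
  have e2 : ∑ x : Fin m, ∑ x_1 : Fin m, q x_1 x / N = ∑ x : Fin m, ∑ x_1 : Fin m, q x x_1 / N := by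
    rw [Finset.sum_comm]
  rw [e1, e2]
  simp only [div_eq_mul_inv, ← Finset.mul_sum, ← Finset.sum_mul]
  generalize (∑ i : Fin m, w i) = W
  generalize (∑ i : Fin m, g i) = Gs
  generalize (∑ i : Fin m, ∑ i_1 : Fin m, q i i_1) = Q
  generalize (∑ x : Fin m, ∑ x_1 : Fin m, d x x_1) = D
  simp only [one_mul, ← div_eq_mul_inv]
  field_simp
  have hp : N ^ 6 * N⁻¹ ^ 6 = 1 := by
    rw [← mul_pow, mul_inv_cancel₀ hN, one_pow]
  linear_combination (8 * N * th2 - 8 * th ^ 2) * Complex.I_sq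

/-- `(1/n²) tr 𝓛_I² = −2(⟨H²⟩ − ⟨H⟩²) + Σ_{j,k} |⟨L_j L_k⟩|² + ½⟨G²⟩ + ½⟨G⟩²`
with `G = Σ_j L_j† L_j`. -/
theorem supertrace_gksl_sq (n m : ℕ) (hn : 2 ≤ n)
    (H : Matrix (Fin n) (Fin n) ℂ) (hH : H.IsHermitian)
    (L : Fin m → Matrix (Fin n) (Fin n) ℂ) (hL : ∀ j, Matrix.trace (L j) = 0) :
    (1 / (n : ℂ) ^ 2) * supertrace n (gksl H L ∘ₗ gksl H L) =
      -2 * (avg n (H * H) - (avg n H) ^ 2) +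
        (∑ j, ∑ k, ((‖avg n (L j * L k)‖ : ℝ) : ℂ) ^ 2) +
        (1 / 2 : ℂ) * avg n ((∑ j, (L j)ᴴ * L j) * (∑ j, (L j)ᴴ * L j)) +
        (1 / 2 : ℂ) * (avg n (∑ j, (L j)ᴴ * L j)) ^ 2 := by
  rw [gksl_eq, st_comb]
  simp only [Fintype.sum_sum_type, Fin.sum_univ_two, Fintype.sum_prod_type, Fin.sum_univ_three,
    Sum.elim_inl, Sum.elim_inr, Matrix.cons_val_zero, Matrix.cons_val_one, Matrix.head_cons,
    Matrix.cons_val_two, Matrix.tail_cons, one_mul, mul_one, Matrix.trace_one,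
    hL, Finset.sum_add_distrib]
  have hn0 : (n : ℂ) ≠ 0 := Nat.cast_ne_zero.mpr (by omega)
  have hLh : ∀ j, ((L j)ᴴ).trace = 0 := by
    intro j; rw [Matrix.trace_conjTranspose, hL, star_zero]
  have hconj : ∀ j k : Fin m, ((L k)ᴴ * (L j)ᴴ).trace = starRingEnd ℂ ((L j * L k).trace) := by
    intro j k
    rw [← Matrix.conjTranspose_mul, Matrix.trace_conjTranspose]
    rfl
  have hcomm : ∀ x : Fin m, ((L x)ᴴ * L x * H).trace = (H * ((L x)ᴴ * L x)).trace := by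
    intro x; exact Matrix.trace_mul_comm _ H
  have habs : ∀ j k : Fin m, ((‖avg n (L j * L k)‖ : ℝ) : ℂ) ^ 2 =
      (L j * L k).trace * starRingEnd ℂ ((L j * L k).trace) / (n : ℂ) ^ 2 := by
    intro j k
    rw [← Complex.ofReal_pow, Complex.sq_norm, Complex.normSq_eq_conj_mul_self]
    simp only [avg, map_div₀, map_natCast]
    ring
  simp only [hLh, hconj, hcomm, habs, Fintype.card_fin, mul_zero, zero_mul, mul_one,
    Finset.sum_const_zero, add_zero, zero_add]
  simp only [avg, Matrix.trace_sum, Matrix.sum_mul, Matrix.mul_sum, Finset.sum_div]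
  exact key (n : ℂ) H.trace (H * H).trace hn0 (fun x => ((L x)ᴴ * L x).trace)
    (fun x => (H * ((L x)ᴴ * L x)).trace)
    (fun x y => ((L x)ᴴ * L x * ((L y)ᴴ * L y)).trace)
    (fun x y => (L x * L y).trace * starRingEnd ℂ ((L x * L y).trace))
end

section
/- Let n ≥ 2 and let 𝓛_I be the GKSL superoperator 𝓛_I(ρ) = −i[H, ρ] + Σ_j (L_j ρ L_j† − ½{L_j† L_j, ρ}) on n×n complex matrices, where H is Hermitian and Tr L_j = 0 for all j. Then 𝔓(𝓛_I) = −(n²/(n²−1))·⟨G⟩·(𝓘 − (I/n)·Tr(·)), i.e. 𝔓(𝓛_I)(X) = −(n²/(n²−1))·⟨G⟩·(X − (Tr X/n)·I), where G = Σ_j L_j† L_j and ⟨A⟩ = Tr A / n. -/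
open Matrix

lemma stL_mulRight (n : ℕ) (A : Matrix (Fin n) (Fin n) ℂ) :
    stL n (LinearMap.mulRight ℂ A) = n * Matrix.trace A := by
  simp only [stL, supertrace, LinearMap.coe_mk, AddHom.coe_mk, LinearMap.mulRight_apply]
  have : ∀ k m : Fin n, ((Matrix.single k m 1 : Matrix (Fin n) (Fin n) ℂ) * A) k m
      = A m m := by
    intro k m; simp [Matrix.mul_apply, Matrix.single]
  simp [this, Matrix.trace, Matrix.diag, Finset.mul_sum]

lemma stL_sandwich (n : ℕ) (A B : Matrix (Fin n) (Fin n) ℂ) :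
    stL n (LinearMap.mulRight ℂ B ∘ₗ LinearMap.mulLeft ℂ A) =
      Matrix.trace A * Matrix.trace B := by
  simp only [stL, supertrace, LinearMap.coe_mk, AddHom.coe_mk, LinearMap.comp_apply,
    LinearMap.mulLeft_apply, LinearMap.mulRight_apply]
  have : ∀ k m : Fin n, (A * (Matrix.single k m 1 : Matrix (Fin n) (Fin n) ℂ) * B) k m
      = A k k * B m m := by
    intro k m
    simp [Matrix.mul_apply, Matrix.single, Finset.sum_mul, mul_ite, ite_and,
      Finset.sum_ite_eq, Finset.sum_ite_eq']
  simp only [this, Matrix.trace, Matrix.diag, Finset.sum_mul, Finset.mul_sum]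
  rw [Finset.sum_comm]

lemma stL_mulLeft (n : ℕ) (A : Matrix (Fin n) (Fin n) ℂ) :
    stL n (LinearMap.mulLeft ℂ A) = n * Matrix.trace A := by
  simp only [stL, supertrace, LinearMap.coe_mk, AddHom.coe_mk, LinearMap.mulLeft_apply]
  have : ∀ k m : Fin n, (A * (Matrix.single k m 1 : Matrix (Fin n) (Fin n) ℂ)) k m
      = A k k := by
    intro k m; simp [Matrix.mul_apply, Matrix.single]
  simp [this, Matrix.trace, Matrix.diag, Finset.mul_sum, mul_comm]

/-- `𝔓(𝓛_I) = −(n²/(n²−1)) ⟨G⟩ (𝓘 − (I/n) Tr(·))` with `G = Σ_j L_j† L_j`. -/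
theorem twirl_gksl (n m : ℕ) (hn : 2 ≤ n)
    (H : Matrix (Fin n) (Fin n) ℂ) (hH : H.IsHermitian)
    (L : Fin m → Matrix (Fin n) (Fin n) ℂ) (hL : ∀ j, Matrix.trace (L j) = 0) :
    twirl n (gksl H L) =
      (-((n : ℂ) ^ 2 / ((n : ℂ) ^ 2 - 1)) * avg n (∑ j, (L j)ᴴ * L j)) •
        (LinearMap.id - ((n : ℂ))⁻¹ • traceMap n) ∧
    ∀ X, twirl n (gksl H L) X =
      (-((n : ℂ) ^ 2 / ((n : ℂ) ^ 2 - 1)) * avg n (∑ j, (L j)ᴴ * L j)) •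
        (X - (Matrix.trace X / (n : ℂ)) • (1 : Matrix (Fin n) (Fin n) ℂ)) := by
  have hn0 : (n : ℂ) ≠ 0 := by
    exact_mod_cast Nat.cast_ne_zero.mpr (by omega)
  have hn1 : ((n : ℂ) ^ 2 - 1) ≠ 0 := by
    rw [sub_ne_zero]
    intro h
    have : ((n ^ 2 : ℕ) : ℂ) = ((1 : ℕ) : ℂ) := by push_cast; simpa using h
    have := Nat.cast_injective (R := ℂ) this
    nlinarith [this]
  set G : Matrix (Fin n) (Fin n) ℂ := ∑ j, (L j)ᴴ * L j with hG
  have h1 : Matrix.trace ((gksl H L) 1) = 0 := by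
    simp only [gksl, LinearMap.add_apply, LinearMap.smul_apply, LinearMap.sub_apply,
      LinearMap.sum_apply, LinearMap.mulLeft_apply, LinearMap.mulRight_apply,
      LinearMap.comp_apply, mul_one, one_mul, sub_self, smul_zero, zero_add,
      Matrix.trace_sum, Matrix.trace_sub, Matrix.trace_smul, Matrix.trace_add]
    refine Finset.sum_eq_zero fun j _ => ?_
    rw [Matrix.trace_mul_comm]
    ring_nf
  have h2 : supertrace n (gksl H L) = -(n : ℂ) * Matrix.trace G := by
    have : supertrace n (gksl H L) = stL n (gksl H L) := rfl
    rw [this, gksl, map_add, _root_.map_smul, map_sub, map_sum]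
    simp only [map_sub, _root_.map_smul, map_add, stL_mulLeft, stL_mulRight, stL_sandwich, hL,
      zero_mul, smul_eq_mul]
    rw [hG, Matrix.trace_sum, Finset.mul_sum]
    rw [sub_self, mul_zero, zero_add]
    refine Finset.sum_congr rfl fun j _ => ?_
    ring
  constructor
  · rw [twirl, h1, h2]
    have ha : ((n : ℂ) * 0 - (-(n : ℂ) * Matrix.trace G)) / ((n : ℂ) * ((n : ℂ) ^ 2 - 1))
        = -((-((n : ℂ) ^ 2 / ((n : ℂ) ^ 2 - 1)) * avg n G) * (n : ℂ)⁻¹) := by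
      rw [avg]; field_simp; ring
    have hb : ((n : ℂ) * (-(n : ℂ) * Matrix.trace G) - 0) / ((n : ℂ) * ((n : ℂ) ^ 2 - 1))
        = -((n : ℂ) ^ 2 / ((n : ℂ) ^ 2 - 1)) * avg n G := by
      rw [avg]; field_simp; ring
    rw [ha, hb]
    module
  · intro X
    rw [twirl, h1, h2]
    have ha : ((n : ℂ) * 0 - (-(n : ℂ) * Matrix.trace G)) / ((n : ℂ) * ((n : ℂ) ^ 2 - 1))
        = -((-((n : ℂ) ^ 2 / ((n : ℂ) ^ 2 - 1)) * avg n G) * ((n : ℂ))⁻¹) := by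
      rw [avg]; field_simp; ring
    have hb : ((n : ℂ) * (-(n : ℂ) * Matrix.trace G) - 0) / ((n : ℂ) * ((n : ℂ) ^ 2 - 1))
        = -((n : ℂ) ^ 2 / ((n : ℂ) ^ 2 - 1)) * avg n G := by
      rw [avg]; field_simp; ring
    simp only [LinearMap.add_apply, LinearMap.smul_apply, LinearMap.id_apply, ha, hb]
    rw [smul_sub]
    have ht : traceMap n X = Matrix.trace X • (1 : Matrix (Fin n) (Fin n) ℂ) := by
      simp [traceMap, LinearMap.toSpanSingleton_apply]
    rw [ht, smul_smul, smul_smul]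
    module
end
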